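/- arXiv:2605.00048 — 6 statements merged into one kernel-verified Lean document; each statement's English description precedes it below -/
import Mathlib

section
/- Let M : [0,1]² → [0,1] be an averaging aggregation function (min(x,y) ≤ M(x,y) ≤ max(x,y)) and let f : [0,1]² → [0,1] be nonincreasing in its first variable. If G(x,y) := M(f(x,y), f(y,x)) satisfies G(x,y)=1 ⟺ x=y, then f satisfies the ordering property: f(x,y)=1 ⟺ x ≤ y. -/
open Set

/-- If `M` is an averaging aggregation function, `f` is nonincreasing in its
first variable, and `G(x,y) = M(f x y, f y x)` satisfies REF2, then `f` satisfies OP. -/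
theorem stmt_1 (M f : ℝ → ℝ → ℝ)
    (hM0 : M 0 0 = 0) (hM1 : M 1 1 = 1)
    (hMmap : ∀ x ∈ Icc (0:ℝ) 1, ∀ y ∈ Icc (0:ℝ) 1, M x y ∈ Icc (0:ℝ) 1)
    (hMmono : ∀ x₁ ∈ Icc (0:ℝ) 1, ∀ x₂ ∈ Icc (0:ℝ) 1, ∀ y₁ ∈ Icc (0:ℝ) 1, ∀ y₂ ∈ Icc (0:ℝ) 1,
      x₁ ≤ x₂ → y₁ ≤ y₂ → M x₁ y₁ ≤ M x₂ y₂)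
    (hAvg : ∀ x ∈ Icc (0:ℝ) 1, ∀ y ∈ Icc (0:ℝ) 1, min x y ≤ M x y ∧ M x y ≤ max x y)
    (hfmap : ∀ x ∈ Icc (0:ℝ) 1, ∀ y ∈ Icc (0:ℝ) 1, f x y ∈ Icc (0:ℝ) 1)
    (hI1 : ∀ x₁ ∈ Icc (0:ℝ) 1, ∀ x₂ ∈ Icc (0:ℝ) 1, ∀ y ∈ Icc (0:ℝ) 1,
      x₁ ≤ x₂ → f x₂ y ≤ f x₁ y)
    (hREF2 : ∀ x ∈ Icc (0:ℝ) 1, ∀ y ∈ Icc (0:ℝ) 1, (M (f x y) (f y x) = 1 ↔ x = y)) :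
    ∀ x ∈ Icc (0:ℝ) 1, ∀ y ∈ Icc (0:ℝ) 1, (f x y = 1 ↔ x ≤ y) := by
  -- First: f x x = 1 for all x in [0,1]
  have hdiag : ∀ x ∈ Icc (0:ℝ) 1, f x x = 1 := by
    intro x hx
    have hfx := hfmap x hx x hx
    have hG : M (f x x) (f x x) = 1 := (hREF2 x hx x hx).mpr rfl
    have havg := (hAvg (f x x) hfx (f x x) hfx).2
    rw [max_self] at havg
    linarith [hfx.2, hG ▸ havg]
  intro x hx y hy
  constructor
  · intro hfxy
    by_contra hlt
    push_neg at hlt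
    have hle : y ≤ x := le_of_lt hlt
    have h1 : f x x ≤ f y x := hI1 y hy x hx x hx hle
    have hfyx1 : f y x = 1 := le_antisymm (hfmap y hy x hx).2 (by rw [← hdiag x hx]; exact h1)
    have : M (f x y) (f y x) = 1 := by rw [hfxy, hfyx1]; exact hM1
    have := (hREF2 x hx y hy).mp this
    exact absurd this (ne_of_gt hlt)
  · intro hxy
    have h1 : f y y ≤ f x y := hI1 x hx y hy y hy hxy
    exact le_antisymm (hfmap x hx y hy).2 (by rw [← hdiag y hy]; exact h1)
end

section
/- Let M : [0,1]² → [0,1] be a commutative binary aggregation function with neutral element 1, let N be a strong negation, and let f : [0,1]² → [0,1] satisfy: (I1) nonincreasing in the first variable, (CC) f(x,y)=0 ⟺ (x=1 and y=0), (CP(N)) f(x,y)=f(N(y),N(x)), and (OP) f(x,y)=1 ⟺ x ≤ y. Then G(x,y) := M(f(x,y), f(y,x)) is a restricted equivalence function with respect to N: G is symmetric, G(x,y)=1 ⟺ x=y, G(x,y)=0 ⟺ {x,y}={0,1}, G(N(x),N(y))=G(x,y), and x ≤ y ≤ z implies G(x,z) ≤ G(x,y) and G(x,z) ≤ G(y,z).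 -/
open Set

/-- If `M` is a commutative aggregation function with neutral element 1,
`N` a strong negation, and `f` satisfies I1, CC, CP(N) and OP, then
`G(x,y) = M(f x y, f y x)` is a restricted equivalence function with respect to `N`. -/
theorem stmt_6 (M f : ℝ → ℝ → ℝ) (N : ℝ → ℝ)
    (hM0 : M 0 0 = 0) (hM1 : M 1 1 = 1)
    (hMmap : ∀ x ∈ Icc (0:ℝ) 1, ∀ y ∈ Icc (0:ℝ) 1, M x y ∈ Icc (0:ℝ) 1)
    (hMmono : ∀ x₁ ∈ Icc (0:ℝ) 1, ∀ x₂ ∈ Icc (0:ℝ) 1, ∀ y₁ ∈ Icc (0:ℝ) 1, ∀ y₂ ∈ Icc (0:ℝ) 1,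
      x₁ ≤ x₂ → y₁ ≤ y₂ → M x₁ y₁ ≤ M x₂ y₂)
    (hMcomm : ∀ x ∈ Icc (0:ℝ) 1, ∀ y ∈ Icc (0:ℝ) 1, M x y = M y x)
    (hNeutL : ∀ y ∈ Icc (0:ℝ) 1, M 1 y = y)
    (hNeutR : ∀ x ∈ Icc (0:ℝ) 1, M x 1 = x)
    (hNmap : ∀ x ∈ Icc (0:ℝ) 1, N x ∈ Icc (0:ℝ) 1)
    (hNanti : ∀ x ∈ Icc (0:ℝ) 1, ∀ y ∈ Icc (0:ℝ) 1, x ≤ y → N y ≤ N x)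
    (hN0 : N 0 = 1) (hN1 : N 1 = 0)
    (hNinv : ∀ x ∈ Icc (0:ℝ) 1, N (N x) = x)
    (hfmap : ∀ x ∈ Icc (0:ℝ) 1, ∀ y ∈ Icc (0:ℝ) 1, f x y ∈ Icc (0:ℝ) 1)
    (hI1 : ∀ x₁ ∈ Icc (0:ℝ) 1, ∀ x₂ ∈ Icc (0:ℝ) 1, ∀ y ∈ Icc (0:ℝ) 1,
      x₁ ≤ x₂ → f x₂ y ≤ f x₁ y)
    (hCC : ∀ x ∈ Icc (0:ℝ) 1, ∀ y ∈ Icc (0:ℝ) 1, (f x y = 0 ↔ x = 1 ∧ y = 0))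
    (hCPN : ∀ x ∈ Icc (0:ℝ) 1, ∀ y ∈ Icc (0:ℝ) 1, f x y = f (N y) (N x))
    (hOP : ∀ x ∈ Icc (0:ℝ) 1, ∀ y ∈ Icc (0:ℝ) 1, (f x y = 1 ↔ x ≤ y)) :
    (∀ x ∈ Icc (0:ℝ) 1, ∀ y ∈ Icc (0:ℝ) 1,
        M (f x y) (f y x) = M (f y x) (f x y)) ∧
    (∀ x ∈ Icc (0:ℝ) 1, ∀ y ∈ Icc (0:ℝ) 1, (M (f x y) (f y x) = 1 ↔ x = y)) ∧
    (∀ x ∈ Icc (0:ℝ) 1, ∀ y ∈ Icc (0:ℝ) 1,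
        (M (f x y) (f y x) = 0 ↔ (x = 1 ∧ y = 0) ∨ (x = 0 ∧ y = 1))) ∧
    (∀ x ∈ Icc (0:ℝ) 1, ∀ y ∈ Icc (0:ℝ) 1,
        M (f (N x) (N y)) (f (N y) (N x)) = M (f x y) (f y x)) ∧
    (∀ x ∈ Icc (0:ℝ) 1, ∀ y ∈ Icc (0:ℝ) 1, ∀ z ∈ Icc (0:ℝ) 1, x ≤ y → y ≤ z →
        M (f x z) (f z x) ≤ M (f x y) (f y x) ∧
        M (f x z) (f z x) ≤ M (f y z) (f z y)) := by
  have key : ∀ x ∈ Icc (0:ℝ) 1, ∀ y ∈ Icc (0:ℝ) 1, x ≤ y →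
      M (f x y) (f y x) = f y x := by
    intro x hx y hy hxy
    rw [(hOP x hx y hy).2 hxy, hNeutL _ (hfmap y hy x hx)]
  refine ⟨fun x hx y hy => hMcomm _ (hfmap x hx y hy) _ (hfmap y hy x hx), ?_, ?_, ?_, ?_⟩
  · intro x hx y hy
    rcases le_total x y with h | h
    · rw [key x hx y hy h, hOP y hy x hx]
      exact ⟨fun h' => le_antisymm h h', fun h' => h'.ge⟩
    · rw [hMcomm _ (hfmap x hx y hy) _ (hfmap y hy x hx), key y hy x hx h, hOP x hx y hy]
      exact ⟨fun h' => le_antisymm h' h, fun h' => h'.le⟩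
  · intro x hx y hy
    rcases le_total x y with h | h
    · rw [key x hx y hy h, hCC y hy x hx]
      constructor
      · rintro ⟨h1, h2⟩; exact Or.inr ⟨h2, h1⟩
      · rintro (⟨h1, h2⟩ | ⟨h1, h2⟩)
        · exfalso; rw [h1, h2] at h; linarith
        · exact ⟨h2, h1⟩
    · rw [hMcomm _ (hfmap x hx y hy) _ (hfmap y hy x hx), key y hy x hx h, hCC x hx y hy]
      constructor
      · rintro ⟨h1, h2⟩; exact Or.inl ⟨h1, h2⟩
      · rintro (⟨h1, h2⟩ | ⟨h1, h2⟩)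
        · exact ⟨h1, h2⟩
        · exfalso; rw [h1, h2] at h; linarith
  · intro x hx y hy
    rw [hCPN (N x) (hNmap x hx) (N y) (hNmap y hy), hNinv x hx, hNinv y hy,
        hCPN (N y) (hNmap y hy) (N x) (hNmap x hx), hNinv x hx, hNinv y hy,
        hMcomm _ (hfmap y hy x hx) _ (hfmap x hx y hy)]
  · intro x hx y hy z hz hxy hyz
    have hxz := hxy.trans hyz
    constructor
    · rw [key x hx z hz hxz, key x hx y hy hxy]
      exact hI1 y hy z hz x hx hyz
    · rw [key x hx z hz hxz, key y hy z hz hyz, hCPN z hz x hx, hCPN z hz y hy]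
      exact hI1 (N y) (hNmap y hy) (N x) (hNmap x hx) (N z) (hNmap z hz)
        (hNanti x hx y hy hxy)
end

section
/- Let T be a left-continuous t-norm, I_T its residuated implication, F(x,y) = T(I_T(x,y), I_T(y,x)), and let f, g : U → [0,1] be two functions on a nonempty set U such that the infima of f and g over U exist (attained or as infima in [0,1]). Then F(inf_{x∈U} f(x), inf_{x∈U} g(x)) ≥ inf_{x∈U} F(f(x), g(x)), and likewise F(sup_{x∈U} f(x), sup_{x∈U} g(x)) ≥ inf_{x∈U} F(f(x), g(x)). -/
open Set

/-- For a left-continuous t-norm `T` with residuated implication `I`,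
`F(x,y) = T(I x y, I y x)`, and `f, g : U → [0,1]` on a nonempty set `U`:
`F (⨅ x, f x) (⨅ x, g x) ≥ ⨅ x, F (f x) (g x)` and
`F (⨆ x, f x) (⨆ x, g x) ≥ ⨅ x, F (f x) (g x)`. -/
theorem stmt_12 {U : Type*} [Nonempty U] (T I : ℝ → ℝ → ℝ) (f g : U → ℝ)
    (hTmap : ∀ x ∈ Icc (0:ℝ) 1, ∀ y ∈ Icc (0:ℝ) 1, T x y ∈ Icc (0:ℝ) 1)
    (hTcomm : ∀ x ∈ Icc (0:ℝ) 1, ∀ y ∈ Icc (0:ℝ) 1, T x y = T y x)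
    (hTassoc : ∀ x ∈ Icc (0:ℝ) 1, ∀ y ∈ Icc (0:ℝ) 1, ∀ z ∈ Icc (0:ℝ) 1,
      T (T x y) z = T x (T y z))
    (hTmono : ∀ x₁ ∈ Icc (0:ℝ) 1, ∀ x₂ ∈ Icc (0:ℝ) 1, ∀ y₁ ∈ Icc (0:ℝ) 1, ∀ y₂ ∈ Icc (0:ℝ) 1,
      x₁ ≤ x₂ → y₁ ≤ y₂ → T x₁ y₁ ≤ T x₂ y₂)
    (hTneut : ∀ y ∈ Icc (0:ℝ) 1, T 1 y = y)
    (hIdef : ∀ x ∈ Icc (0:ℝ) 1, ∀ y ∈ Icc (0:ℝ) 1,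
      I x y = sSup {a | a ∈ Icc (0:ℝ) 1 ∧ T x a ≤ y})
    (hImap : ∀ x ∈ Icc (0:ℝ) 1, ∀ y ∈ Icc (0:ℝ) 1, I x y ∈ Icc (0:ℝ) 1)
    (hRes : ∀ x ∈ Icc (0:ℝ) 1, ∀ y ∈ Icc (0:ℝ) 1, ∀ z ∈ Icc (0:ℝ) 1,
      (T x y ≤ z ↔ x ≤ I y z))
    (hf : ∀ x : U, f x ∈ Icc (0:ℝ) 1) (hg : ∀ x : U, g x ∈ Icc (0:ℝ) 1) :
    (⨅ x : U, T (I (f x) (g x)) (I (g x) (f x))) ≤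
      T (I (⨅ x : U, f x) (⨅ x : U, g x)) (I (⨅ x : U, g x) (⨅ x : U, f x)) ∧
    (⨅ x : U, T (I (f x) (g x)) (I (g x) (f x))) ≤
      T (I (⨆ x : U, f x) (⨆ x : U, g x)) (I (⨆ x : U, g x) (⨆ x : U, f x)) := by
  have h01 : (1:ℝ) ∈ Icc (0:ℝ) 1 := ⟨zero_le_one, le_refl 1⟩
  obtain ⟨x₀⟩ := ‹Nonempty U›
  -- T x y ≤ y and ≤ x
  have hTle2 : ∀ x ∈ Icc (0:ℝ) 1, ∀ y ∈ Icc (0:ℝ) 1, T x y ≤ y := by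
    intro x hx y hy
    have := hTmono x hx 1 h01 y hy y hy hx.2 le_rfl
    rwa [hTneut y hy] at this
  have hTle1 : ∀ x ∈ Icc (0:ℝ) 1, ∀ y ∈ Icc (0:ℝ) 1, T x y ≤ x := by
    intro x hx y hy
    rw [hTcomm x hx y hy]; exact hTle2 y hy x hx
  -- I x y = 1 when x ≤ y
  have hIone : ∀ x ∈ Icc (0:ℝ) 1, ∀ y ∈ Icc (0:ℝ) 1, x ≤ y → I x y = 1 := by
    intro x hx y hy hxy
    have h1 : T 1 x ≤ y := by rw [hTneut x hx]; exact hxy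
    have := (hRes 1 h01 x hx y hy).1 h1
    exact le_antisymm (hImap x hx y hy).2 this
  have hFmem : ∀ x : U, T (I (f x) (g x)) (I (g x) (f x)) ∈ Icc (0:ℝ) 1 := fun x =>
    hTmap _ (hImap _ (hf x) _ (hg x)) _ (hImap _ (hg x) _ (hf x))
  set m := ⨅ x : U, T (I (f x) (g x)) (I (g x) (f x)) with hm
  have hbddF : BddBelow (Set.range fun x : U => T (I (f x) (g x)) (I (g x) (f x))) :=
    ⟨0, by rintro y ⟨x, rfl⟩; exact (hFmem x).1⟩
  have hmle : ∀ x : U, m ≤ T (I (f x) (g x)) (I (g x) (f x)) := fun x => ciInf_le hbddF x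
  have hmmem : m ∈ Icc (0:ℝ) 1 :=
    ⟨le_ciInf fun x => (hFmem x).1, (hmle x₀).trans (hFmem x₀).2⟩
  have hm1 : ∀ x : U, m ≤ I (f x) (g x) := fun x =>
    (hmle x).trans (hTle1 _ (hImap _ (hf x) _ (hg x)) _ (hImap _ (hg x) _ (hf x)))
  have hm2 : ∀ x : U, m ≤ I (g x) (f x) := fun x =>
    (hmle x).trans (hTle2 _ (hImap _ (hf x) _ (hg x)) _ (hImap _ (hg x) _ (hf x)))
  -- T m (f x) ≤ g x and T m (g x) ≤ f x
  have hTmf : ∀ x : U, T m (f x) ≤ g x := fun x =>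
    (hRes m hmmem (f x) (hf x) (g x) (hg x)).2 (hm1 x)
  have hTmg : ∀ x : U, T m (g x) ≤ f x := fun x =>
    (hRes m hmmem (g x) (hg x) (f x) (hf x)).2 (hm2 x)
  -- infs and sups
  have hbf : BddBelow (Set.range f) := ⟨0, by rintro y ⟨x, rfl⟩; exact (hf x).1⟩
  have hbg : BddBelow (Set.range g) := ⟨0, by rintro y ⟨x, rfl⟩; exact (hg x).1⟩
  have hbf' : BddAbove (Set.range f) := ⟨1, by rintro y ⟨x, rfl⟩; exact (hf x).2⟩
  have hbg' : BddAbove (Set.range g) := ⟨1, by rintro y ⟨x, rfl⟩; exact (hg x).2⟩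
  set A := ⨅ x : U, f x with hA
  set B := ⨅ x : U, g x with hB
  set Sf := ⨆ x : U, f x with hSf
  set Sg := ⨆ x : U, g x with hSg
  have hAle : ∀ x : U, A ≤ f x := fun x => ciInf_le hbf x
  have hBle : ∀ x : U, B ≤ g x := fun x => ciInf_le hbg x
  have hfle : ∀ x : U, f x ≤ Sf := fun x => le_ciSup hbf' x
  have hgle : ∀ x : U, g x ≤ Sg := fun x => le_ciSup hbg' x
  have hAmem : A ∈ Icc (0:ℝ) 1 := ⟨le_ciInf fun x => (hf x).1, (hAle x₀).trans (hf x₀).2⟩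
  have hBmem : B ∈ Icc (0:ℝ) 1 := ⟨le_ciInf fun x => (hg x).1, (hBle x₀).trans (hg x₀).2⟩
  have hSfmem : Sf ∈ Icc (0:ℝ) 1 := ⟨(hf x₀).1.trans (hfle x₀), ciSup_le fun x => (hf x).2⟩
  have hSgmem : Sg ∈ Icc (0:ℝ) 1 := ⟨(hg x₀).1.trans (hgle x₀), ciSup_le fun x => (hg x).2⟩
  -- the four key inequalities
  have key1 : m ≤ I A B := by
    rw [← hRes m hmmem A hAmem B hBmem]
    refine le_ciInf fun x => ?_
    calc T m A ≤ T m (f x) := hTmono m hmmem m hmmem A hAmem (f x) (hf x) le_rfl (hAle x)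
      _ ≤ g x := hTmf x
  have key2 : m ≤ I B A := by
    rw [← hRes m hmmem B hBmem A hAmem]
    refine le_ciInf fun x => ?_
    calc T m B ≤ T m (g x) := hTmono m hmmem m hmmem B hBmem (g x) (hg x) le_rfl (hBle x)
      _ ≤ f x := hTmg x
  have key3 : m ≤ I Sf Sg := by
    rw [← hRes m hmmem Sf hSfmem Sg hSgmem, hTcomm m hmmem Sf hSfmem,
      hRes Sf hSfmem m hmmem Sg hSgmem]
    refine ciSup_le fun x => ?_
    rw [← hRes (f x) (hf x) m hmmem Sg hSgmem, hTcomm (f x) (hf x) m hmmem]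
    exact (hTmf x).trans (hgle x)
  have key4 : m ≤ I Sg Sf := by
    rw [← hRes m hmmem Sg hSgmem Sf hSfmem, hTcomm m hmmem Sg hSgmem,
      hRes Sg hSgmem m hmmem Sf hSfmem]
    refine ciSup_le fun x => ?_
    rw [← hRes (g x) (hg x) m hmmem Sf hSfmem, hTcomm (g x) (hg x) m hmmem]
    exact (hTmg x).trans (hfle x)
  constructor
  · rcases le_total A B with h | h
    · rw [hIone A hAmem B hBmem h, hTneut _ (hImap B hBmem A hAmem)]
      exact key2
    · rw [hIone B hBmem A hAmem h, hTcomm _ (hImap A hAmem B hBmem) 1 h01,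
        hTneut _ (hImap A hAmem B hBmem)]
      exact key1
  · rcases le_total Sf Sg with h | h
    · rw [hIone Sf hSfmem Sg hSgmem h, hTneut _ (hImap Sg hSgmem Sf hSfmem)]
      exact key4
    · rw [hIone Sg hSgmem Sf hSfmem h, hTcomm _ (hImap Sf hSfmem Sg hSgmem) 1 h01,
        hTneut _ (hImap Sf hSfmem Sg hSgmem)]
      exact key3
end

section
/- Let U be a nonempty set, let T be a left-continuous t-norm with residuated implication I_T, let F(x,y) = T(I_T(x,y), I_T(y,x)), and define the similarity measure S_F(A,B) = inf_{x∈U} F(A(x), B(x)) for fuzzy sets A, B : U → [0,1]. Let R : U × V → [0,1] be a fuzzy relation and define R(A)(y) = sup_{x∈U} min(A(x), R(x,y)). If I_T is continuous in its first variable, then S_F(R(A), R(B)) ≥ S_F(A, B) for all fuzzy sets A, B on U. -/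
open Set

private lemma stmt13_aux {U : Type*} [Nonempty U] (f : ℝ → ℝ)
    (hf : ContinuousOn f (Icc 0 1)) (g : U → ℝ) (hg : ∀ x, g x ∈ Icc (0:ℝ) 1)
    (s : ℝ) (h : ∀ x, s ≤ f (g x)) : s ≤ f (⨆ x, g x) := by
  have hb : BddAbove (range g) := ⟨1, by rintro _ ⟨x, rfl⟩; exact (hg x).2⟩
  have hne : (range g).Nonempty := range_nonempty g
  have hcl : sSup (range g) ∈ closure (range g) := csSup_mem_closure hne hb
  have hC : IsClosed (Icc (0:ℝ) 1 ∩ f ⁻¹' Ici s) :=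
    hf.preimage_isClosed_of_isClosed isClosed_Icc isClosed_Ici
  have hsub : range g ⊆ Icc (0:ℝ) 1 ∩ f ⁻¹' Ici s := by
    rintro _ ⟨x, rfl⟩
    exact ⟨hg x, h x⟩
  exact ((closure_minimal hsub hC) hcl).2

/-- If `I` is continuous in its first variable, the sup-min image of fuzzy
sets under a fuzzy relation `R` preserves the similarity measure
`S_F(A,B) = ⨅ x, F (A x) (B x)`, where `F(x,y) = T(I x y, I y x)`. -/
theorem stmt_13 {U V : Type*} [Nonempty U] [Nonempty V] (T I : ℝ → ℝ → ℝ)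
    (R : U → V → ℝ) (A B : U → ℝ)
    (hTmap : ∀ x ∈ Icc (0:ℝ) 1, ∀ y ∈ Icc (0:ℝ) 1, T x y ∈ Icc (0:ℝ) 1)
    (hTcomm : ∀ x ∈ Icc (0:ℝ) 1, ∀ y ∈ Icc (0:ℝ) 1, T x y = T y x)
    (hTassoc : ∀ x ∈ Icc (0:ℝ) 1, ∀ y ∈ Icc (0:ℝ) 1, ∀ z ∈ Icc (0:ℝ) 1,
      T (T x y) z = T x (T y z))
    (hTmono : ∀ x₁ ∈ Icc (0:ℝ) 1, ∀ x₂ ∈ Icc (0:ℝ) 1, ∀ y₁ ∈ Icc (0:ℝ) 1, ∀ y₂ ∈ Icc (0:ℝ) 1,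
      x₁ ≤ x₂ → y₁ ≤ y₂ → T x₁ y₁ ≤ T x₂ y₂)
    (hTneut : ∀ y ∈ Icc (0:ℝ) 1, T 1 y = y)
    (hIdef : ∀ x ∈ Icc (0:ℝ) 1, ∀ y ∈ Icc (0:ℝ) 1,
      I x y = sSup {a | a ∈ Icc (0:ℝ) 1 ∧ T x a ≤ y})
    (hImap : ∀ x ∈ Icc (0:ℝ) 1, ∀ y ∈ Icc (0:ℝ) 1, I x y ∈ Icc (0:ℝ) 1)
    (hRes : ∀ x ∈ Icc (0:ℝ) 1, ∀ y ∈ Icc (0:ℝ) 1, ∀ z ∈ Icc (0:ℝ) 1,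
      (T x y ≤ z ↔ x ≤ I y z))
    (hIcont : ∀ y ∈ Icc (0:ℝ) 1, ContinuousOn (fun x => I x y) (Icc (0:ℝ) 1))
    (hR : ∀ x y, R x y ∈ Icc (0:ℝ) 1)
    (hA : ∀ x, A x ∈ Icc (0:ℝ) 1) (hB : ∀ x, B x ∈ Icc (0:ℝ) 1) :
    (⨅ x : U, T (I (A x) (B x)) (I (B x) (A x))) ≤
      ⨅ y : V, T (I (⨆ x : U, min (A x) (R x y)) (⨆ x : U, min (B x) (R x y)))
                 (I (⨆ x : U, min (B x) (R x y)) (⨆ x : U, min (A x) (R x y))) := by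
  have h01 : (1:ℝ) ∈ Icc (0:ℝ) 1 := ⟨zero_le_one, le_rfl⟩
  set s : ℝ := ⨅ x : U, T (I (A x) (B x)) (I (B x) (A x)) with hs_def
  -- T u v ≤ min u v for u v ∈ [0,1]
  have hTle_right : ∀ u ∈ Icc (0:ℝ) 1, ∀ v ∈ Icc (0:ℝ) 1, T u v ≤ v := by
    intro u hu v hv
    have := hTmono u hu 1 h01 v hv v hv hu.2 le_rfl
    rwa [hTneut v hv] at this
  have hTle_left : ∀ u ∈ Icc (0:ℝ) 1, ∀ v ∈ Icc (0:ℝ) 1, T u v ≤ u := by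
    intro u hu v hv
    rw [hTcomm u hu v hv]
    exact hTle_right v hv u hu
  have hFmem : ∀ x : U, T (I (A x) (B x)) (I (B x) (A x)) ∈ Icc (0:ℝ) 1 := fun x =>
    hTmap _ (hImap _ (hA x) _ (hB x)) _ (hImap _ (hB x) _ (hA x))
  have hbdd : BddBelow (range fun x : U => T (I (A x) (B x)) (I (B x) (A x))) :=
    ⟨0, by rintro _ ⟨x, rfl⟩; exact (hFmem x).1⟩
  have hs_le : ∀ x : U, s ≤ T (I (A x) (B x)) (I (B x) (A x)) := fun x => ciInf_le hbdd x
  have hs0 : (0:ℝ) ≤ s := le_ciInf fun x => (hFmem x).1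
  have hs1 : s ≤ 1 := (hs_le (Classical.arbitrary U)).trans (hFmem _).2
  have hsI : s ∈ Icc (0:ℝ) 1 := ⟨hs0, hs1⟩
  -- s ≤ I (P x) (Q x) in both directions
  have hsAB : ∀ x : U, s ≤ I (A x) (B x) := fun x =>
    (hs_le x).trans (hTle_left _ (hImap _ (hA x) _ (hB x)) _ (hImap _ (hB x) _ (hA x)))
  have hsBA : ∀ x : U, s ≤ I (B x) (A x) := fun x =>
    (hs_le x).trans (hTle_right _ (hImap _ (hA x) _ (hB x)) _ (hImap _ (hB x) _ (hA x)))
  refine le_ciInf fun y => ?_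
  -- abbreviations
  have key : ∀ P Q : U → ℝ, (∀ x, P x ∈ Icc (0:ℝ) 1) → (∀ x, Q x ∈ Icc (0:ℝ) 1) →
      (∀ x, s ≤ I (P x) (Q x)) →
      s ≤ I (⨆ x, min (P x) (R x y)) (⨆ x, min (Q x) (R x y)) := by
    intro P Q hP hQ hs'
    have hgP : ∀ x, min (P x) (R x y) ∈ Icc (0:ℝ) 1 :=
      fun x => ⟨le_min (hP x).1 (hR x y).1, (min_le_left _ _).trans (hP x).2⟩
    have hgQ : ∀ x, min (Q x) (R x y) ∈ Icc (0:ℝ) 1 :=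
      fun x => ⟨le_min (hQ x).1 (hR x y).1, (min_le_left _ _).trans (hQ x).2⟩
    have hbQ : BddAbove (range fun x => min (Q x) (R x y)) :=
      ⟨1, by rintro _ ⟨x, rfl⟩; exact (hgQ x).2⟩
    have hc : (⨆ x, min (Q x) (R x y)) ∈ Icc (0:ℝ) 1 := by
      constructor
      · exact (hgQ (Classical.arbitrary U)).1.trans (le_ciSup hbQ _)
      · exact ciSup_le fun x => (hgQ x).2
    refine stmt13_aux (fun t => I t (⨆ x, min (Q x) (R x y)))
      (hIcont _ hc) (fun x => min (P x) (R x y)) hgP s fun x => ?_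
    -- show s ≤ I (min (P x) (R x y)) c
    have hTsP : T s (P x) ≤ Q x := (hRes s hsI (P x) (hP x) (Q x) (hQ x)).mpr (hs' x)
    have h1 : T s (min (P x) (R x y)) ≤ Q x :=
      (hTmono s hsI s hsI _ (hgP x) _ (hP x) le_rfl (min_le_left _ _)).trans hTsP
    have h2 : T s (min (P x) (R x y)) ≤ R x y := by
      have := hTmono s hsI 1 h01 _ (hgP x) _ (hR x y) hs1 (min_le_right _ _)
      rwa [hTneut _ (hR x y)] at this
    have h3 : T s (min (P x) (R x y)) ≤ min (Q x) (R x y) := le_min h1 h2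
    have h4 : T s (min (P x) (R x y)) ≤ ⨆ x, min (Q x) (R x y) :=
      h3.trans (le_ciSup hbQ x)
    exact (hRes s hsI _ (hgP x) _ hc).mp h4
  have hga : ∀ x, min (A x) (R x y) ∈ Icc (0:ℝ) 1 :=
    fun x => ⟨le_min (hA x).1 (hR x y).1, (min_le_left _ _).trans (hA x).2⟩
  have hgb : ∀ x, min (B x) (R x y) ∈ Icc (0:ℝ) 1 :=
    fun x => ⟨le_min (hB x).1 (hR x y).1, (min_le_left _ _).trans (hB x).2⟩
  set a : ℝ := ⨆ x, min (A x) (R x y) with ha_def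
  set b : ℝ := ⨆ x, min (B x) (R x y) with hb_def
  have hbA : BddAbove (range fun x => min (A x) (R x y)) :=
    ⟨1, by rintro _ ⟨x, rfl⟩; exact (hga x).2⟩
  have hbB : BddAbove (range fun x => min (B x) (R x y)) :=
    ⟨1, by rintro _ ⟨x, rfl⟩; exact (hgb x).2⟩
  have haI : a ∈ Icc (0:ℝ) 1 :=
    ⟨(hga (Classical.arbitrary U)).1.trans (le_ciSup hbA _), ciSup_le fun x => (hga x).2⟩
  have hbI : b ∈ Icc (0:ℝ) 1 :=
    ⟨(hgb (Classical.arbitrary U)).1.trans (le_ciSup hbB _), ciSup_le fun x => (hgb x).2⟩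
  have hsab : s ≤ I a b := key A B hA hB hsAB
  have hsba : s ≤ I b a := key B A hB hA hsBA
  -- if u ≤ v then I u v = 1
  have hIone : ∀ u ∈ Icc (0:ℝ) 1, ∀ v ∈ Icc (0:ℝ) 1, u ≤ v → I u v = 1 := by
    intro u hu v hv huv
    rw [hIdef u hu v hv]
    have h1mem : (1:ℝ) ∈ {c | c ∈ Icc (0:ℝ) 1 ∧ T u c ≤ v} := by
      refine ⟨h01, ?_⟩
      rw [hTcomm u hu 1 h01, hTneut u hu]
      exact huv
    refine le_antisymm (csSup_le ⟨1, h1mem⟩ fun c hc => hc.1.2) (le_csSup ?_ h1mem)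
    exact ⟨1, fun c hc => hc.1.2⟩
  rcases le_total a b with hab | hba
  · rw [hIone a haI b hbI hab, hTneut _ (hImap b hbI a haI)]
    exact hsba
  · rw [hIone b hbI a haI hba, hTcomm _ (hImap a haI b hbI) 1 h01,
      hTneut _ (hImap a haI b hbI)]
    exact hsab
end

section
/- Let U be a nonempty set, T a left-continuous t-norm with residuated implication I_T, F(x,y)=T(I_T(x,y),I_T(y,x)), and S_F(A,B) = inf_{x∈U} F(A(x),B(x)). Then for fuzzy sets A, B, C on U: S_F(A ∪ C, B ∪ C) ≥ S_F(A,B), where (A ∪ C)(x) = max(A(x), C(x)); and similarly S_F(A ∩ C, B ∩ C) ≥ S_F(A,B), where (A ∩ C)(x) = min(A(x), C(x)). -/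
open Set

/-- With `S_F(A,B) = ⨅ x, F (A x) (B x)` for `F(x,y) = T(I x y, I y x)`:
`S_F(A ∪ C, B ∪ C) ≥ S_F(A,B)` and `S_F(A ∩ C, B ∩ C) ≥ S_F(A,B)`. -/
theorem stmt_14 {U : Type*} [Nonempty U] (T I : ℝ → ℝ → ℝ) (A B C : U → ℝ)
    (hTmap : ∀ x ∈ Icc (0:ℝ) 1, ∀ y ∈ Icc (0:ℝ) 1, T x y ∈ Icc (0:ℝ) 1)
    (hTcomm : ∀ x ∈ Icc (0:ℝ) 1, ∀ y ∈ Icc (0:ℝ) 1, T x y = T y x)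
    (hTassoc : ∀ x ∈ Icc (0:ℝ) 1, ∀ y ∈ Icc (0:ℝ) 1, ∀ z ∈ Icc (0:ℝ) 1,
      T (T x y) z = T x (T y z))
    (hTmono : ∀ x₁ ∈ Icc (0:ℝ) 1, ∀ x₂ ∈ Icc (0:ℝ) 1, ∀ y₁ ∈ Icc (0:ℝ) 1, ∀ y₂ ∈ Icc (0:ℝ) 1,
      x₁ ≤ x₂ → y₁ ≤ y₂ → T x₁ y₁ ≤ T x₂ y₂)
    (hTneut : ∀ y ∈ Icc (0:ℝ) 1, T 1 y = y)
    (hIdef : ∀ x ∈ Icc (0:ℝ) 1, ∀ y ∈ Icc (0:ℝ) 1,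
      I x y = sSup {a | a ∈ Icc (0:ℝ) 1 ∧ T x a ≤ y})
    (hImap : ∀ x ∈ Icc (0:ℝ) 1, ∀ y ∈ Icc (0:ℝ) 1, I x y ∈ Icc (0:ℝ) 1)
    (hRes : ∀ x ∈ Icc (0:ℝ) 1, ∀ y ∈ Icc (0:ℝ) 1, ∀ z ∈ Icc (0:ℝ) 1,
      (T x y ≤ z ↔ x ≤ I y z))
    (hA : ∀ x, A x ∈ Icc (0:ℝ) 1) (hB : ∀ x, B x ∈ Icc (0:ℝ) 1)
    (hC : ∀ x, C x ∈ Icc (0:ℝ) 1) :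
    (⨅ x : U, T (I (A x) (B x)) (I (B x) (A x))) ≤
      (⨅ x : U, T (I (max (A x) (C x)) (max (B x) (C x)))
                  (I (max (B x) (C x)) (max (A x) (C x)))) ∧
    (⨅ x : U, T (I (A x) (B x)) (I (B x) (A x))) ≤
      (⨅ x : U, T (I (min (A x) (C x)) (min (B x) (C x)))
                  (I (min (B x) (C x)) (min (A x) (C x)))) := by
  have one : (1:ℝ) ∈ Icc (0:ℝ) 1 := by constructor <;> norm_num
  have hmaxm : ∀ a ∈ Icc (0:ℝ) 1, ∀ c ∈ Icc (0:ℝ) 1, max a c ∈ Icc (0:ℝ) 1 := by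
    intro a ha c hc
    exact ⟨le_max_of_le_left ha.1, max_le ha.2 hc.2⟩
  have hminm : ∀ a ∈ Icc (0:ℝ) 1, ∀ c ∈ Icc (0:ℝ) 1, min a c ∈ Icc (0:ℝ) 1 := by
    intro a ha c hc
    exact ⟨le_min ha.1 hc.1, min_le_of_left_le ha.2⟩
  -- key lemma for max
  have keymax : ∀ a ∈ Icc (0:ℝ) 1, ∀ b ∈ Icc (0:ℝ) 1, ∀ c ∈ Icc (0:ℝ) 1,
      I a b ≤ I (max a c) (max b c) := by
    intro a ha b hb c hc
    have hI := hImap a ha b hb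
    have hMa := hmaxm a ha c hc
    have hMb := hmaxm b hb c hc
    rw [← hRes (I a b) hI (max a c) hMa (max b c) hMb]
    rcases max_cases a c with ⟨h1, h2⟩ | ⟨h1, h2⟩
    · rw [h1]
      have : T (I a b) a ≤ b := (hRes (I a b) hI a ha b hb).mpr le_rfl
      exact this.trans (le_max_left _ _)
    · rw [h1]
      have : T (I a b) c ≤ T 1 c := hTmono _ hI _ one _ hc _ hc hI.2 le_rfl
      rw [hTneut c hc] at this
      exact this.trans (le_max_right _ _)
  have keymin : ∀ a ∈ Icc (0:ℝ) 1, ∀ b ∈ Icc (0:ℝ) 1, ∀ c ∈ Icc (0:ℝ) 1,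
      I a b ≤ I (min a c) (min b c) := by
    intro a ha b hb c hc
    have hI := hImap a ha b hb
    have hMa := hminm a ha c hc
    have hMb := hminm b hb c hc
    rw [← hRes (I a b) hI (min a c) hMa (min b c) hMb]
    refine le_min ?_ ?_
    · have h1 : T (I a b) (min a c) ≤ T (I a b) a :=
        hTmono _ hI _ hI _ hMa _ ha le_rfl (min_le_left _ _)
      exact h1.trans ((hRes (I a b) hI a ha b hb).mpr le_rfl)
    · have h1 : T (I a b) (min a c) ≤ T 1 (min a c) :=
        hTmono _ hI _ one _ hMa _ hMa hI.2 le_rfl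
      rw [hTneut _ hMa] at h1
      exact h1.trans (min_le_right _ _)
  have hbdd : BddBelow (Set.range fun x : U => T (I (A x) (B x)) (I (B x) (A x))) := by
    refine ⟨0, ?_⟩
    rintro _ ⟨x, rfl⟩
    exact (hTmap _ (hImap _ (hA x) _ (hB x)) _ (hImap _ (hB x) _ (hA x))).1
  constructor
  · refine le_ciInf fun x => le_trans (ciInf_le hbdd x) ?_
    exact hTmono _ (hImap _ (hA x) _ (hB x)) _
      (hImap _ (hmaxm _ (hA x) _ (hC x)) _ (hmaxm _ (hB x) _ (hC x)))
      _ (hImap _ (hB x) _ (hA x))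
      _ (hImap _ (hmaxm _ (hB x) _ (hC x)) _ (hmaxm _ (hA x) _ (hC x)))
      (keymax _ (hA x) _ (hB x) _ (hC x)) (keymax _ (hB x) _ (hA x) _ (hC x))
  · refine le_ciInf fun x => le_trans (ciInf_le hbdd x) ?_
    exact hTmono _ (hImap _ (hA x) _ (hB x)) _
      (hImap _ (hminm _ (hA x) _ (hC x)) _ (hminm _ (hB x) _ (hC x)))
      _ (hImap _ (hB x) _ (hA x))
      _ (hImap _ (hminm _ (hB x) _ (hC x)) _ (hminm _ (hA x) _ (hC x)))
      (keymin _ (hA x) _ (hB x) _ (hC x)) (keymin _ (hB x) _ (hA x) _ (hC x))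
end

section
/- Let T be a strict t-norm, T(x,y) = t⁻¹(t(x)·t(y)) for an increasing bijection t on [0,1], with R-implication I_T. Then for all x > z with z > 0 and all y > 0: I_T(x, T(y,z)) = T(y, I_T(x,z)). -/
open Set

/-- For a strict t-norm `T(x,y) = t⁻¹(t x * t y)` with R-implication `I`:
for all `x > z > 0` and `y > 0`, `I x (T y z) = T y (I x z)`. -/
theorem stmt_17 (t tinv : ℝ → ℝ)
    (ht0 : t 0 = 0) (ht1 : t 1 = 1)
    (htmap : ∀ x ∈ Icc (0:ℝ) 1, t x ∈ Icc (0:ℝ) 1)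
    (htinvmap : ∀ x ∈ Icc (0:ℝ) 1, tinv x ∈ Icc (0:ℝ) 1)
    (htmono : ∀ x ∈ Icc (0:ℝ) 1, ∀ y ∈ Icc (0:ℝ) 1, x < y → t x < t y)
    (htinv : ∀ x ∈ Icc (0:ℝ) 1, tinv (t x) = x)
    (hinvt : ∀ x ∈ Icc (0:ℝ) 1, t (tinv x) = x)
    (T I : ℝ → ℝ → ℝ)
    (hT : ∀ x ∈ Icc (0:ℝ) 1, ∀ y ∈ Icc (0:ℝ) 1, T x y = tinv (t x * t y))
    (hI : ∀ x ∈ Icc (0:ℝ) 1, ∀ y ∈ Icc (0:ℝ) 1,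
      I x y = if x ≤ y then 1 else tinv (t y / t x)) :
    ∀ x ∈ Icc (0:ℝ) 1, ∀ y ∈ Icc (0:ℝ) 1, ∀ z ∈ Icc (0:ℝ) 1,
      z < x → 0 < z → 0 < y → I x (T y z) = T y (I x z) := by
  intro x hx y hy z hz hzx hz0 hy0
  have h0 : (0:ℝ) ∈ Icc (0:ℝ) 1 := ⟨le_refl 0, zero_le_one⟩
  have htx := htmap x hx
  have hty := htmap y hy
  have htz := htmap z hz
  have hx0 : (0:ℝ) < x := hz0.trans hzx
  have htxpos : 0 < t x := by have := htmono 0 h0 x hx hx0; rwa [ht0] at this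
  have htzpos : 0 < t z := by have := htmono 0 h0 z hz hz0; rwa [ht0] at this
  have htypos : 0 < t y := by have := htmono 0 h0 y hy hy0; rwa [ht0] at this
  have htzx : t z < t x := htmono z hz x hx hzx
  have hprod : t y * t z ∈ Icc (0:ℝ) 1 := by
    constructor
    · exact mul_nonneg hty.1 htz.1
    · calc t y * t z ≤ 1 * 1 := mul_le_mul hty.2 htz.2 htz.1 zero_le_one
        _ = 1 := by ring
  have hTyz : T y z = tinv (t y * t z) := hT y hy z hz
  have hTyzIcc : T y z ∈ Icc (0:ℝ) 1 := by rw [hTyz]; exact htinvmap _ hprod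
  have htTyz : t (T y z) = t y * t z := by rw [hTyz]; exact hinvt _ hprod
  have hprodlt : t y * t z < t x :=
    lt_of_le_of_lt (by nlinarith [hty.2, htz.1]) htzx
  have hTyzlt : T y z < x := by
    by_contra h
    push_neg at h
    rcases h.eq_or_lt with heq | hlt
    · rw [← heq] at htTyz; linarith
    · have := htmono x hx _ hTyzIcc hlt
      rw [htTyz] at this; linarith
  have hLHS : I x (T y z) = tinv (t y * t z / t x) := by
    rw [hI x hx _ hTyzIcc, if_neg (not_le.mpr hTyzlt), htTyz]
  have hq : t z / t x ∈ Icc (0:ℝ) 1 := by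
    constructor
    · exact div_nonneg htz.1 (le_of_lt htxpos)
    · exact (div_le_one htxpos).mpr (le_of_lt htzx)
  have hIxz : I x z = tinv (t z / t x) := by
    rw [hI x hx z hz, if_neg (not_le.mpr hzx)]
  have hIxzIcc : I x z ∈ Icc (0:ℝ) 1 := by rw [hIxz]; exact htinvmap _ hq
  have hRHS : T y (I x z) = tinv (t y * (t z / t x)) := by
    rw [hT y hy _ hIxzIcc, hIxz, hinvt _ hq]
  rw [hLHS, hRHS, mul_div_assoc]
end
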